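/- Approximate complementary slackness (from the proof of Theorem 3): let h : ℝ^{n_x} × ℝ^{n_u} → ℝ^{n_h} be Lipschitz with constant L_h, let x : [0,1] → ℝ^{n_x}, u : [0,1] → ℝ^{n_u}, μ : [0,1] → ℝ^{n_h} be continuous with μ(t)ᵀ h(x(t), u(t)) = 0 for all t ∈ [0,1], let h_max bound ‖h(x_N(t), u_N(t))‖ uniformly in t and N where x_N = B_N x, u_N = B_N u, and let μ_max bound ‖μ(t)‖ on [0,1]. Define μ_N(t) = (1/(N+1)) Σ_{j=0}^N μ(j/N) b_{j,N}(t). Then for every N ≥ 1 and every node t_k = k/N, |μ_N(t_k)ᵀ h(x_N(t_k), u_N(t_k))| ≤ (1/(N+1)) · [ h_max · (5 n_h/4) · W_μ(N^{−1/2}) + μ_max · L_h · ( (5 n_x/4) W_x(N^{−1/2}) + (5 n_u/4) W_u(N^{−1/2}) ) ]. -/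

import Mathlib

/-!
At a node `t`, complementary slackness `⟪μ t, h (x t, u t)⟫ = 0` gives
`⟪B_N μ, h_N⟫ = ⟪B_N μ - μ, h_N⟫ + ⟪μ, h_N - h (x, u)⟫`, and Cauchy–Schwarz with the Lipschitz
bound on `h` reduces everything to the Bernstein estimate `‖B_N g t - g t‖ ≤ (5/4) W_g(N^{-1/2})`.
That estimate holds in any normed space: it comes from `‖g s - g t‖ ≤ (1 + N (s - t)²) W_g(N^{-1/2})`
(telescoping over `⌈√N |s - t|⌉` steps of length `≤ N^{-1/2}`) averaged against the Bernstein
weights, which have mean `t` and variance `t (1 - t) / N ≤ 1 / (4N)`.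
-/

open scoped BigOperators

/-- The Bernstein basis polynomial `b_{j,N}(t) = C(N,j) t^j (1-t)^(N-j)`. -/
noncomputable def bern (N j : ℕ) (t : ℝ) : ℝ :=
  (N.choose j : ℝ) * t ^ j * (1 - t) ^ (N - j)

/-- The modulus of continuity on `[0,1]` of a function `g`. -/
noncomputable def modCont {E : Type*} [NormedAddCommGroup E] (g : ℝ → E) (δ : ℝ) : ℝ :=
  sSup {d : ℝ | ∃ s t : ℝ, s ∈ Set.Icc (0:ℝ) 1 ∧ t ∈ Set.Icc (0:ℝ) 1 ∧
    |s - t| ≤ δ ∧ d = ‖g s - g t‖}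

/-- The `N`-th Bernstein approximation of `g : [0,1] → E`. -/
noncomputable def bapprox {E : Type*} [AddCommMonoid E] [Module ℝ E]
    (N : ℕ) (g : ℝ → E) (t : ℝ) : E :=
  ∑ j : Fin (N + 1), bern N (j : ℕ) t • g (((j : ℕ) : ℝ) / (N : ℝ))

open scoped RealInnerProductSpace

lemma natCast_div_mem_Icc {k N : ℕ} (hk : k ≤ N) : (k : ℝ) / N ∈ Set.Icc (0 : ℝ) 1 :=
  ⟨by positivity, div_le_one_of_le₀ (by exact_mod_cast hk) (Nat.cast_nonneg N)⟩

lemma Nat.ceil_le_one_add_sq {a : ℝ} (ha : 0 ≤ a) : (⌈a⌉₊ : ℝ) ≤ 1 + a ^ 2 := by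
  rcases le_or_gt a 1 with ha1 | ha1
  · have : ⌈a⌉₊ ≤ 1 := Nat.ceil_le.2 (by exact_mod_cast ha1)
    have : (⌈a⌉₊ : ℝ) ≤ 1 := by exact_mod_cast this
    nlinarith
  · nlinarith [Nat.ceil_lt_add_one ha]

lemma bern_eq_eval (N j : ℕ) (t : ℝ) : bern N j t = (bernsteinPolynomial ℝ N j).eval t := by
  simp [bern, bernsteinPolynomial]

lemma bern_nonneg {N j : ℕ} {t : ℝ} (ht : t ∈ Set.Icc (0 : ℝ) 1) : 0 ≤ bern N j t := by
  have : 0 ≤ 1 - t := sub_nonneg.2 ht.2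
  have : 0 ≤ t := ht.1
  unfold bern; positivity

lemma sum_bern (N : ℕ) (t : ℝ) : ∑ j : Fin (N + 1), bern N j t = 1 := by
  rw [Fin.sum_univ_eq_sum_range (fun j => bern N j t)]
  simpa [Polynomial.eval_finsetSum, bern_eq_eval] using
    congrArg (Polynomial.eval t) (bernsteinPolynomial.sum ℝ N)

lemma sum_sq_mul_bern {N : ℕ} (hN : N ≠ 0) (t : ℝ) :
    ∑ j : Fin (N + 1), ((j : ℝ) / N - t) ^ 2 * bern N j t = t * (1 - t) / N := by
  have hvar := congrArg (Polynomial.eval t) (bernsteinPolynomial.variance ℝ N)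
  simp only [Polynomial.eval_finsetSum, Polynomial.eval_mul, Polynomial.eval_pow,
    Polynomial.eval_sub, Polynomial.eval_natCast, Polynomial.eval_X,
    Polynomial.eval_one, nsmul_eq_mul, ← bern_eq_eval] at hvar
  have hN' : (N : ℝ) ≠ 0 := by exact_mod_cast hN
  rw [Fin.sum_univ_eq_sum_range (fun j => ((j : ℝ) / N - t) ^ 2 * bern N j t)]
  calc ∑ j ∈ Finset.range (N + 1), ((j : ℝ) / N - t) ^ 2 * bern N j t
      = (∑ j ∈ Finset.range (N + 1), (N * t - j) ^ 2 * bern N j t) / N ^ 2 := by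
        rw [Finset.sum_div]
        refine Finset.sum_congr rfl fun j _ => ?_
        field_simp
        ring
    _ = t * (1 - t) / N := by
        rw [hvar]
        field_simp

lemma bapprox_sub_eq_sum {E : Type*} [AddCommGroup E] [Module ℝ E] (N : ℕ) (g : ℝ → E) (t : ℝ) :
    bapprox N g t - g t = ∑ j : Fin (N + 1), bern N j t • (g ((j : ℝ) / N) - g t) := by
  simp only [bapprox, smul_sub, Finset.sum_sub_distrib, ← Finset.sum_smul, sum_bern, one_smul]

section ModulusOfContinuity

variable {E : Type*} [NormedAddCommGroup E] {g : ℝ → E} {δ : ℝ}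

lemma modCont_bddAbove (hg : ContinuousOn g (Set.Icc 0 1)) :
    BddAbove {d : ℝ | ∃ s t : ℝ, s ∈ Set.Icc (0:ℝ) 1 ∧ t ∈ Set.Icc (0:ℝ) 1 ∧
      |s - t| ≤ δ ∧ d = ‖g s - g t‖} := by
  obtain ⟨M, hM⟩ := isCompact_Icc.exists_bound_of_continuousOn hg
  refine ⟨2 * M, ?_⟩
  rintro d ⟨s, t, hs, ht, -, rfl⟩
  linarith [norm_sub_le (g s) (g t), hM s hs, hM t ht]

lemma norm_sub_le_modCont (hg : ContinuousOn g (Set.Icc 0 1)) {s t : ℝ}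
    (hs : s ∈ Set.Icc (0:ℝ) 1) (ht : t ∈ Set.Icc (0:ℝ) 1) (hst : |s - t| ≤ δ) :
    ‖g s - g t‖ ≤ modCont g δ :=
  le_csSup (modCont_bddAbove hg) ⟨s, t, hs, ht, hst, rfl⟩

lemma modCont_nonneg (hg : ContinuousOn g (Set.Icc 0 1)) (hδ : 0 ≤ δ) : 0 ≤ modCont g δ :=
  (norm_nonneg _).trans <| norm_sub_le_modCont (s := 0) (t := 0) hg
    (Set.left_mem_Icc.2 zero_le_one) (Set.left_mem_Icc.2 zero_le_one) (by simpa using hδ)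

lemma norm_sub_le_mul_modCont (hg : ContinuousOn g (Set.Icc 0 1)) {s t : ℝ} {k : ℕ}
    (hs : s ∈ Set.Icc (0:ℝ) 1) (ht : t ∈ Set.Icc (0:ℝ) 1) (hst : |s - t| ≤ k * δ) :
    ‖g s - g t‖ ≤ k * modCont g δ := by
  rcases Nat.eq_zero_or_pos k with rfl | hk
  · obtain rfl : s = t := by simpa [sub_eq_zero] using hst
    simp
  have hk' : (0 : ℝ) < k := by exact_mod_cast hk
  set p : ℕ → ℝ := fun i => t + ((i : ℝ) / k) • (s - t)
  have hp : ∀ i ≤ k, p i ∈ Set.Icc (0:ℝ) 1 := fun i hi =>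
    (convex_Icc 0 1).add_smul_sub_mem ht hs (natCast_div_mem_Icc hi)
  have hstep : ∀ i, |p (i + 1) - p i| ≤ δ := fun i => by
    simp only [p, smul_eq_mul]
    rw [show t + ((i + 1 : ℕ) : ℝ) / k * (s - t) - (t + (i : ℝ) / k * (s - t)) = (s - t) / k by
      push_cast; field_simp; ring, abs_div, Nat.abs_cast, div_le_iff₀ hk']
    linarith
  have htel : g s - g t = ∑ i ∈ Finset.range k, (g (p (i + 1)) - g (p i)) := by
    rw [Finset.sum_range_sub (fun i => g (p i))]
    simp [p, hk'.ne']
  calc ‖g s - g t‖ ≤ ∑ i ∈ Finset.range k, ‖g (p (i + 1)) - g (p i)‖ := htel ▸ norm_sum_le _ _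
    _ ≤ ∑ _i ∈ Finset.range k, modCont g δ := Finset.sum_le_sum fun i hi =>
        norm_sub_le_modCont hg (hp _ (Finset.mem_range.1 hi)) (hp _ (Finset.mem_range.1 hi).le)
          (hstep i)
    _ = k * modCont g δ := by simp

lemma norm_sub_le_one_add_sq_mul_modCont (hg : ContinuousOn g (Set.Icc 0 1)) (hδ : 0 < δ)
    {s t : ℝ} (hs : s ∈ Set.Icc (0:ℝ) 1) (ht : t ∈ Set.Icc (0:ℝ) 1) :
    ‖g s - g t‖ ≤ (1 + (s - t) ^ 2 / δ ^ 2) * modCont g δ := by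
  have hlam : 0 ≤ |s - t| / δ := by positivity
  calc ‖g s - g t‖ ≤ ⌈|s - t| / δ⌉₊ * modCont g δ := by
        refine norm_sub_le_mul_modCont hg hs ht ?_
        rw [← div_le_iff₀ hδ]
        exact Nat.le_ceil _
    _ ≤ (1 + (|s - t| / δ) ^ 2) * modCont g δ := by
        gcongr
        · exact modCont_nonneg hg hδ.le
        · exact Nat.ceil_le_one_add_sq hlam
    _ = (1 + (s - t) ^ 2 / δ ^ 2) * modCont g δ := by rw [div_pow, sq_abs]

end ModulusOfContinuity

lemma norm_bapprox_sub_le {E : Type*} [NormedAddCommGroup E] [NormedSpace ℝ E] {N : ℕ}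
    (hN : N ≠ 0) {g : ℝ → E} (hg : ContinuousOn g (Set.Icc 0 1)) {t : ℝ}
    (ht : t ∈ Set.Icc (0:ℝ) 1) :
    ‖bapprox N g t - g t‖ ≤ 5 / 4 * modCont g ((N : ℝ) ^ (-(1/2 : ℝ))) := by
  set δ : ℝ := (N : ℝ) ^ (-(1/2 : ℝ))
  set W := modCont g δ
  have hNpos : (0 : ℝ) < N := by positivity
  have hδ : 0 < δ := by positivity
  have hδsq : δ ^ 2 = (N : ℝ)⁻¹ := by
    rw [← Real.rpow_natCast, ← Real.rpow_mul hNpos.le]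
    norm_num [Real.rpow_neg_one]
  have hW : 0 ≤ W := modCont_nonneg hg hδ.le
  calc ‖bapprox N g t - g t‖ ≤ ∑ j : Fin (N + 1), bern N j t * ‖g ((j : ℝ) / N) - g t‖ := by
        rw [bapprox_sub_eq_sum]
        refine (norm_sum_le _ _).trans_eq (Finset.sum_congr rfl fun j _ => ?_)
        rw [norm_smul, Real.norm_of_nonneg (bern_nonneg ht)]
    _ ≤ ∑ j : Fin (N + 1), bern N j t * ((1 + N * ((j : ℝ) / N - t) ^ 2) * W) := by
        gcongr with j
        · exact bern_nonneg ht
        · have := norm_sub_le_one_add_sq_mul_modCont hg hδ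
            (natCast_div_mem_Icc (Nat.lt_succ_iff.1 j.2)) ht
          rwa [hδsq, div_inv_eq_mul, mul_comm _ (N : ℝ)] at this
    _ = ∑ j : Fin (N + 1), bern N j t * W
          + N * W * ∑ j : Fin (N + 1), ((j : ℝ) / N - t) ^ 2 * bern N j t := by
        rw [Finset.mul_sum, ← Finset.sum_add_distrib]
        exact Finset.sum_congr rfl fun j _ => by ring
    _ = (1 + t * (1 - t)) * W := by
        rw [← Finset.sum_mul, sum_bern, sum_sq_mul_bern hN t]
        field_simp
    _ ≤ 5 / 4 * W := by
        gcongr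
        nlinarith [sq_nonneg (t - 1 / 2)]

lemma EuclideanSpace.norm_le_mul_of_norm_le {n : ℕ} {v : EuclideanSpace ℝ (Fin n)} {c : ℝ}
    (hv : ‖v‖ ≤ c) : ‖v‖ ≤ n * c := by
  rcases Nat.eq_zero_or_pos n with rfl | hn
  · simp [Subsingleton.elim v 0]
  · have : (1 : ℝ) ≤ n := by exact_mod_cast hn
    nlinarith [norm_nonneg v]

lemma sum_mul_eq_inner {n : ℕ} (a b : EuclideanSpace ℝ (Fin n)) : ∑ i, a i * b i = ⟪a, b⟫ := by
  simp [PiLp.inner_apply, mul_comm]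

lemma abs_inner_le_of_inner_eq_zero {F : Type*} [NormedAddCommGroup F] [InnerProductSpace ℝ F]
    {a b a' b' : F} (h : ⟪a', b'⟫ = 0) : |⟪a, b⟫| ≤ ‖a - a'‖ * ‖b‖ + ‖a'‖ * ‖b - b'‖ := by
  have hsplit : ⟪a, b⟫ = ⟪a - a', b⟫ + ⟪a', b - b'⟫ := by
    rw [inner_sub_left, inner_sub_right, h]; ring
  rw [hsplit]
  exact (abs_add_le _ _).trans
    (add_le_add (abs_real_inner_le_norm _ _) (abs_real_inner_le_norm _ _))

lemma LipschitzWith.norm_sub_le_prod {E F G : Type*} [SeminormedAddCommGroup E]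
    [SeminormedAddCommGroup F] [SeminormedAddCommGroup G] {f : E × F → G} {L : NNReal}
    (hf : LipschitzWith L f) (p q : E × F) :
    ‖f p - f q‖ ≤ L * (‖p.1 - q.1‖ + ‖p.2 - q.2‖) := by
  refine (hf.norm_sub_le p q).trans (mul_le_mul_of_nonneg_left ?_ L.2)
  rw [Prod.norm_def]
  exact max_le (le_add_of_nonneg_right (norm_nonneg _)) (le_add_of_nonneg_left (norm_nonneg _))

/-- approximate complementary slackness, from the proof of Theorem 3:
with `μ_N(t) = (1/(N+1)) Σ_j μ(j/N) b_{j,N}(t)`, at every node `t_k = k/N` one has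
`|μ_N(t_k)ᵀ h(x_N(t_k), u_N(t_k))| ≤ (1/(N+1)) · [h_max·(5n_h/4)·W_μ(N^{-1/2})
  + μ_max·L_h·((5n_x/4)·W_x(N^{-1/2}) + (5n_u/4)·W_u(N^{-1/2}))]`. -/
theorem approximate_complementary_slackness (nx nu nh : ℕ)
    (h : EuclideanSpace ℝ (Fin nx) × EuclideanSpace ℝ (Fin nu) → EuclideanSpace ℝ (Fin nh))
    (Lh : NNReal) (hLh : LipschitzWith Lh h)
    (x : ℝ → EuclideanSpace ℝ (Fin nx)) (u : ℝ → EuclideanSpace ℝ (Fin nu))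
    (μ : ℝ → EuclideanSpace ℝ (Fin nh))
    (hx : ContinuousOn x (Set.Icc (0:ℝ) 1)) (hu : ContinuousOn u (Set.Icc (0:ℝ) 1))
    (hμ : ContinuousOn μ (Set.Icc (0:ℝ) 1))
    (hcs : ∀ t ∈ Set.Icc (0:ℝ) 1, (∑ i, μ t i * h (x t, u t) i) = 0)
    (hmax : ℝ)
    (hhmax : ∀ N : ℕ, 1 ≤ N → ∀ t ∈ Set.Icc (0:ℝ) 1,
      ‖h (bapprox N x t, bapprox N u t)‖ ≤ hmax)
    (μmax : ℝ) (hμmax : ∀ t ∈ Set.Icc (0:ℝ) 1, ‖μ t‖ ≤ μmax) :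
    ∀ N : ℕ, 1 ≤ N → ∀ k : ℕ, k ≤ N →
      |∑ i, (((N : ℝ) + 1)⁻¹ • bapprox N μ ((k : ℝ) / (N : ℝ))) i *
          h (bapprox N x ((k : ℝ) / (N : ℝ)), bapprox N u ((k : ℝ) / (N : ℝ))) i|
        ≤ ((N : ℝ) + 1)⁻¹ *
          (hmax * (5 * (nh : ℝ) / 4) * modCont μ ((N : ℝ) ^ (-(1/2 : ℝ)))
            + μmax * (Lh : ℝ) *
              ((5 * (nx : ℝ) / 4) * modCont x ((N : ℝ) ^ (-(1/2 : ℝ)))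
                + (5 * (nu : ℝ) / 4) * modCont u ((N : ℝ) ^ (-(1/2 : ℝ))))) := by
  intro N hN k hk
  set t : ℝ := (k : ℝ) / N
  have ht : t ∈ Set.Icc (0:ℝ) 1 := natCast_div_mem_Icc hk
  have hN0 : N ≠ 0 := Nat.one_le_iff_ne_zero.1 hN
  have hμN := EuclideanSpace.norm_le_mul_of_norm_le (norm_bapprox_sub_le hN0 hμ ht)
  have hxN := EuclideanSpace.norm_le_mul_of_norm_le (norm_bapprox_sub_le hN0 hx ht)
  have huN := EuclideanSpace.norm_le_mul_of_norm_le (norm_bapprox_sub_le hN0 hu ht)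
  have hhN := hLh.norm_sub_le_prod (bapprox N x t, bapprox N u t) (x t, u t)
  have hμmax0 : 0 ≤ μmax := (norm_nonneg _).trans (hμmax t ht)
  set δ : ℝ := (N : ℝ) ^ (-(1/2 : ℝ))
  rw [sum_mul_eq_inner, real_inner_smul_left, abs_mul, abs_of_pos (by positivity)]
  gcongr
  calc |⟪bapprox N μ t, h (bapprox N x t, bapprox N u t)⟫|
      ≤ ‖bapprox N μ t - μ t‖ * ‖h (bapprox N x t, bapprox N u t)‖
        + ‖μ t‖ * ‖h (bapprox N x t, bapprox N u t) - h (x t, u t)‖ :=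
        abs_inner_le_of_inner_eq_zero ((sum_mul_eq_inner _ _).symm.trans (hcs t ht))
    _ ≤ nh * (5 / 4 * modCont μ δ) * hmax
        + μmax * (Lh * (nx * (5 / 4 * modCont x δ) + nu * (5 / 4 * modCont u δ))) := add_le_add
        (mul_le_mul hμN (hhmax N hN t ht) (norm_nonneg _) ((norm_nonneg _).trans hμN))
        (mul_le_mul (hμmax t ht) (hhN.trans (by gcongr)) (norm_nonneg _) hμmax0)
    _ = _ := by ring
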